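/- Let u₀ ∈ H²_{0,σ}(T³), α ∈ (0,1], and let u_n^{α,M}(t) and v_n^{α,M}(t) be the piecewise-constant and piecewise-linear time interpolants of a solution of the Euler–Fourier–Galerkin scheme. Then there exists c > 0, independent of α, M and n, such that: ess sup_{t∈(0,T)} ‖v_n^{α,M}(t)‖₂ + ‖v_n^{α,M}‖_{L²(0,T;H¹(T³))} ≤ c, ess sup_{t∈(0,T)} ‖u_n^{α,M}(t)‖₂ + ‖u_n^{α,M}‖_{L²(0,T;H¹(T³))} ≤ c, and α ‖∇v_n^{α,M}‖_{L²(0,T;L²(T³))} ≤ c. -/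

import Mathlib

/-!
Common framework: the 3-torus `𝕋³ = ℝ³ / 2πℤ³` is modelled by `2π`-periodic
functions on `ℝ³`; space integrals are taken over the fundamental domain
`Box = [0,2π)³`.  Vector fields are described through their Fourier
coefficients `c : (Fin 3 → ℤ) → Fin 3 → ℂ` (with reality, zero-mean and
divergence-free constraints), realized as functions via `u(x) = Σ_k c_k e^{ik·x}`.
`L²`-type norms of such fields are expressed through Parseval's identity.
-/

noncomputable section

open MeasureTheory Filter Real

/-- Points of `ℝ³`; the torus is `ℝ³` modulo `2π`-periodicity. -/
abbrev Vec3 : Type := Fin 3 → ℝ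

/-- Fundamental domain `[0,2π)³` of the torus `𝕋³ = ℝ³/2πℤ³`. -/
def Box : Set Vec3 := Set.univ.pi fun _ : Fin 3 => Set.Ico (0 : ℝ) (2 * π)

/-- `2π`-periodicity in each space variable. -/
def SpacePeriodic {E : Type*} (f : Vec3 → E) : Prop :=
  ∀ (x : Vec3) (m : Fin 3 → ℤ), f (fun j => x j + 2 * π * (m j : ℝ)) = f x

/-- Fourier coefficients of a vector field on the torus. -/
abbrev Coef : Type := (Fin 3 → ℤ) → Fin 3 → ℂ

/-- `|k|²` for a frequency `k ∈ ℤ³`. -/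
def kSq (k : Fin 3 → ℤ) : ℤ := ∑ j, (k j) ^ 2

/-- The character `e^{i k·x}`. -/
def eK (k : Fin 3 → ℤ) (x : Vec3) : ℂ :=
  Complex.exp (Complex.I * ∑ j, (k j : ℂ) * (x j : ℂ))

/-- Realization of Fourier coefficients as a (real) vector field on the torus. -/
def realize (c : Coef) (x : Vec3) (i : Fin 3) : ℝ := (∑' k, c k i * eK k x).re

/-- Realization of scalar Fourier coefficients as a function on the torus. -/
def realizeS (q : (Fin 3 → ℤ) → ℂ) (x : Vec3) : ℝ := (∑' k, q k * eK k x).re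

/-- Fourier coefficients of the partial derivative `∂_j u`. -/
def pd (j : Fin 3) (c : Coef) : Coef := fun k i => Complex.I * (k j : ℂ) * c k i

/-- Fourier coefficients of `Δu`. -/
def lapC (c : Coef) : Coef := fun k i => -((kSq k : ℂ)) * c k i

/-- Difference of two coefficient fields. -/
def subC (c d : Coef) : Coef := fun k i => c k i - d k i

/-- A real, zero-mean, divergence-free field (spectral form of the constraints). -/
structure IsDivFreeField (c : Coef) : Prop where
  zeroMean : ∀ i, c 0 i = 0
  reality : ∀ k i, c (-k) i = starRingEnd ℂ (c k i)
  divFree : ∀ k, ∑ j, (k j : ℂ) * c k j = 0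

/-- Membership in `V_n`: a real, zero-mean, divergence-free trigonometric
polynomial with modes `0 < |k| ≤ n`. -/
def MemVn (n : ℕ) (c : Coef) : Prop :=
  IsDivFreeField c ∧ ∀ k, (n : ℤ) ^ 2 < kSq k → ∀ i, c k i = 0

/-- `u₀ ∈ H²_{0,σ}(𝕋³)`, spectrally. -/
def MemH2 (c : Coef) : Prop :=
  IsDivFreeField c ∧ Summable fun k => (1 + (kSq k : ℝ)) ^ 2 * ∑ i, Complex.normSq (c k i)

/-- The projection `P_n` (restricted to divergence-free fields, it is the
truncation to the modes `|k| ≤ n`). -/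
def projN (n : ℕ) (c : Coef) : Coef :=
  fun k i => if kSq k ≤ (n : ℤ) ^ 2 then c k i else 0

/-- `‖u‖₂²` (squared `L²(𝕋³)` norm), via Parseval. -/
def l2S (c : Coef) : ℝ := (2 * π) ^ 3 * ∑' k, ∑ i, Complex.normSq (c k i)

/-- `‖∇u‖₂²`, via Parseval. -/
def gradS (c : Coef) : ℝ := (2 * π) ^ 3 * ∑' k, (kSq k : ℝ) * ∑ i, Complex.normSq (c k i)

/-- `‖Δu‖₂²`, via Parseval. -/
def lapS (c : Coef) : ℝ := (2 * π) ^ 3 * ∑' k, (kSq k : ℝ) ^ 2 * ∑ i, Complex.normSq (c k i)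

/-- The `L²(𝕋³)` inner product `(u,w)`, via Parseval. -/
def ipS (c d : Coef) : ℝ := (2 * π) ^ 3 * ∑' k, ∑ i, (c k i * starRingEnd ℂ (d k i)).re

/-- The inner product `(∇u,∇w)`, via Parseval. -/
def gipS (c d : Coef) : ℝ :=
  (2 * π) ^ 3 * ∑' k, (kSq k : ℝ) * ∑ i, (c k i * starRingEnd ℂ (d k i)).re

/-- The trilinear term `((u·∇)u, w)` in `L²(𝕋³)`. -/
def nlF (c w : Coef) : ℝ :=
  ∫ x in Box, ∑ i, (∑ j, realize c x j * realize (pd j c) x i) * realize w x i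

/-- Discrete time derivative of coefficient fields: `(a - b)/κ`. -/
def dtc (κ : ℝ) (a b : Coef) : Coef := fun k i => (a k i - b k i) / (κ : ℂ)

/-- The Euler–Fourier–Galerkin scheme for the Navier–Stokes–Voigt equations:
`u 0 = P_n u₀` and, for `m = 1,…,M`, `u m ∈ V_n` satisfies
`(d_t u^m, w) + α²(d_t ∇u^m, ∇w) + (∇u^m, ∇w) + ((u^m·∇)u^m, w) = 0`
for all `w ∈ V_n`, where `κ = T/M`. -/
def Scheme (T α : ℝ) (n M : ℕ) (c0 : Coef) (u : ℕ → Coef) : Prop :=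
  u 0 = projN n c0 ∧
  ∀ m, 1 ≤ m → m ≤ M → MemVn n (u m) ∧
    ∀ w : Coef, MemVn n w →
      ipS (dtc (T / (M : ℝ)) (u m) (u (m - 1))) w
        + α ^ 2 * gipS (dtc (T / (M : ℝ)) (u m) (u (m - 1))) w
        + gipS (u m) w + nlF (u m) w = 0

/-- Piecewise-constant time interpolant: equals `u m` on `[t_{m-1}, t_m)`,
and `u M` at `t = T`, where `t_m = m·(T/M)`. -/
def pwc (T : ℝ) (M : ℕ) (u : ℕ → Coef) : ℝ → Coef := fun t =>
  if t = T then u M else u ((Int.floor (t / (T / (M : ℝ)))).toNat + 1)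

/-- Piecewise-linear (in time) interpolant. -/
def pwl (T : ℝ) (M : ℕ) (u : ℕ → Coef) : ℝ → Coef := fun t =>
  if t = T then u M else fun k i =>
    u (Int.floor (t / (T / (M : ℝ)))).toNat k i +
      (((t - ((Int.floor (t / (T / (M : ℝ)))).toNat : ℝ) * (T / (M : ℝ))) / (T / (M : ℝ)) : ℝ) : ℂ) *
        (u ((Int.floor (t / (T / (M : ℝ)))).toNat + 1) k i
          - u (Int.floor (t / (T / (M : ℝ)))).toNat k i)

/-- The time derivative `∂_t v` of the piecewise-linear interpolant:
equals `d_t u^m = (u^m - u^{m-1})/κ` on `(t_{m-1}, t_m)`. -/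
def pwdt (T : ℝ) (M : ℕ) (u : ℕ → Coef) : ℝ → Coef := fun t k i =>
  (u ((Int.floor (t / (T / (M : ℝ)))).toNat + 1) k i
    - u (Int.floor (t / (T / (M : ℝ)))).toNat k i) / ((T / (M : ℝ) : ℝ) : ℂ)

/-- Spectral solution of the pressure Poisson problem
`-Δp = ∇·(∇·(u⊗u))`, i.e. `p̂_k = -(k⊗k/|k|²) : (u⊗u)^̂_k` for `k ≠ 0`. -/
def presC (c : Coef) : (Fin 3 → ℤ) → ℂ := fun k =>
  if kSq k = 0 then 0 else
    -(∑ a, ∑ b, (k a : ℂ) * (k b : ℂ) * ∑' m, c m a * c (k - m) b) / (kSq k : ℂ)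

/-- The Leray projection at frequency `k`: `v ↦ v - (v·k)k/|k|²`. -/
def lerayK (k : Fin 3 → ℤ) (v : Fin 3 → ℂ) : Fin 3 → ℂ := fun i =>
  if kSq k = 0 then 0 else v i - ((∑ j, (k j : ℂ) * v j) / (kSq k : ℂ)) * (k i : ℂ)

/-- `Q_n = P - P_n`: the Leray-projected Fourier modes with `|k| > n`. -/
def Qn (n : ℕ) (c : Coef) : Coef := fun k =>
  if kSq k ≤ (n : ℤ) ^ 2 then 0 else lerayK k (c k)

/-- Fourier coefficients of `(u·∇)u` (a convolution). -/
def nlinC (c : Coef) : Coef := fun k i =>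
  ∑' m : Fin 3 → ℤ, ∑ j, c (k - m) j * (Complex.I * (m j : ℂ) * c m i)

/-- The partial derivative `∂_j f` of a function on the torus. -/
def pdF (f : Vec3 → ℝ) (j : Fin 3) (x : Vec3) : ℝ := fderiv ℝ f x (Pi.single j 1)

/-- The Laplacian of a function on the torus. -/
def lapF (f : Vec3 → ℝ) (x : Vec3) : ℝ := ∑ j, pdF (fun y => pdF f j y) j x

/-- The `k`-th Fourier coefficient of a function on the torus. -/
def fCoef (f : Vec3 → ℝ) (k : Fin 3 → ℤ) : ℂ :=
  ((1 / (2 * π) ^ 3 : ℝ) : ℂ) * ∫ x in Box, (f x : ℂ) * eK (-k) x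

/-- Fourier coefficients of the product `u·φ` of a (coefficient) vector field
with a scalar function. -/
def prodCoef (U : Coef) (f : Vec3 → ℝ) : Coef := fun k i => ∑' m, U m i * fCoef f (k - m)

/-- Squared `H^{-2}` norm: `Σ_{k≠0} |k|^{-4} |ĝ_k|²`. -/
def hm2 (c : Coef) : ℝ :=
  ∑' k, if kSq k = 0 then 0 else (∑ i, Complex.normSq (c k i)) / (kSq k : ℝ) ^ 2

/-- A scalar space-time test function: smooth, `2π`-periodic in space, with
compact time support contained in `(0,T)`. -/
structure IsTestS (T : ℝ) (φ : ℝ → Vec3 → ℝ) : Prop where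
  smooth : ContDiff ℝ (⊤ : ℕ∞) fun p : ℝ × Vec3 => φ p.1 p.2
  periodic : ∀ t, SpacePeriodic (φ t)
  tsupport : ∃ a b : ℝ, 0 < a ∧ b < T ∧ ∀ t, t ∉ Set.Icc a b → ∀ x, φ t x = 0

/-- A vector test function for the weak formulation: smooth, `2π`-periodic in
space, divergence-free, with zero spatial mean, supported in time in `[0,T)`. -/
structure IsTestV (T : ℝ) (φ : ℝ → Vec3 → Fin 3 → ℝ) : Prop where
  smooth : ContDiff ℝ (⊤ : ℕ∞) fun p : ℝ × Vec3 => φ p.1 p.2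
  periodic : ∀ t, SpacePeriodic (φ t)
  tsupport : ∃ b : ℝ, b < T ∧ ∀ t, b ≤ t → ∀ x i, φ t x i = 0
  divFree : ∀ t x, ∑ j, pdF (fun y => φ t y j) j x = 0
  zeroMean : ∀ t i, (∫ x in Box, φ t x i) = 0

/-- `u ∈ L^∞(0,T;L²_{0,σ}) ∩ L²(0,T;H¹_{0,σ})`, with `G` its weak spatial
gradient (`G t x j i = ∂_j u_i(t,x)`). -/
structure InEnergySpace (T : ℝ) (u : ℝ → Vec3 → Fin 3 → ℝ)
    (G : ℝ → Vec3 → Fin 3 → Fin 3 → ℝ) : Prop where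
  meas_u : Measurable fun p : ℝ × Vec3 => u p.1 p.2
  meas_G : Measurable fun p : ℝ × Vec3 => G p.1 p.2
  periodic_u : ∀ t, SpacePeriodic (u t)
  periodic_G : ∀ t, SpacePeriodic (G t)
  linfty_l2 : ∃ C : ℝ, ∀ᵐ t ∂volume.restrict (Set.Ioo 0 T),
    (∫ x in Box, ∑ i, (u t x i) ^ 2) ≤ C
  l2_h1 : IntegrableOn
    (fun p : ℝ × Vec3 => ∑ i, (u p.1 p.2 i) ^ 2 + ∑ j, ∑ i, (G p.1 p.2 j i) ^ 2)
    (Set.Ioo 0 T ×ˢ Box)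
  weak_grad : ∀ ψ : ℝ → Vec3 → ℝ, IsTestS T ψ → ∀ i j,
    (∫ t in Set.Ioo 0 T, ∫ x in Box, u t x i * pdF (ψ t) j x)
      = -∫ t in Set.Ioo 0 T, ∫ x in Box, G t x j i * ψ t x
  zeroMean : ∀ᵐ t ∂volume.restrict (Set.Ioo 0 T), ∀ i, (∫ x in Box, u t x i) = 0
  divFree : ∀ ψ : ℝ → Vec3 → ℝ, IsTestS T ψ →
    (∫ t in Set.Ioo 0 T, ∫ x in Box, ∑ j, u t x j * pdF (ψ t) j x) = 0

/-- A Leray–Hopf weak solution of the Navier–Stokes equations on `(0,T)×𝕋³`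
with initial datum `u₀` (given by its Fourier coefficients `c0`); `G` is the
weak gradient of `u`. -/
structure IsLerayHopf (T : ℝ) (c0 : Coef) (u : ℝ → Vec3 → Fin 3 → ℝ)
    (G : ℝ → Vec3 → Fin 3 → Fin 3 → ℝ) : Prop where
  energySpace : InEnergySpace T u G
  weakForm : ∀ φ : ℝ → Vec3 → Fin 3 → ℝ, IsTestV T φ →
    (∫ t in Set.Ioo 0 T,
      ((∫ x in Box, ∑ i, u t x i * deriv (fun s => φ s x i) t)
        - (∫ x in Box, ∑ i, ∑ j, G t x j i * pdF (fun y => φ t y i) j x)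
        - ∫ x in Box, ∑ i, (∑ j, u t x j * G t x j i) * φ t x i))
      + (∫ x in Box, ∑ i, realize c0 x i * φ 0 x i) = 0
  energyIneq : ∀ t ∈ Set.Icc 0 T,
    (1 / 2) * (∫ x in Box, ∑ i, (u t x i) ^ 2)
      + (∫ s in Set.Ioo 0 t, ∫ x in Box, ∑ j, ∑ i, (G s x j i) ^ 2)
      ≤ (1 / 2) * l2S c0

/-- A suitable weak solution: a Leray–Hopf weak solution together with a
pressure `p ∈ L^{5/3}((0,T)×𝕋³)` satisfying the local energy inequality. -/
structure IsSuitable (T : ℝ) (c0 : Coef) (u : ℝ → Vec3 → Fin 3 → ℝ)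
    (G : ℝ → Vec3 → Fin 3 → Fin 3 → ℝ) (p : ℝ → Vec3 → ℝ) : Prop where
  lerayHopf : IsLerayHopf T c0 u G
  meas_p : Measurable fun q : ℝ × Vec3 => p q.1 q.2
  p_L53 : IntegrableOn (fun q : ℝ × Vec3 => |p q.1 q.2| ^ ((5 : ℝ) / 3))
    (Set.Ioo 0 T ×ˢ Box)
  localEnergy : ∀ φ : ℝ → Vec3 → ℝ, IsTestS T φ → (∀ t x, 0 ≤ φ t x) →
    (∫ t in Set.Ioo 0 T, ∫ x in Box, (∑ j, ∑ i, (G t x j i) ^ 2) * φ t x)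
      ≤ ∫ t in Set.Ioo 0 T, ∫ x in Box,
          ((∑ i, (u t x i) ^ 2) / 2) * (deriv (fun s => φ s x) t + lapF (φ t) x)
            + ((∑ i, (u t x i) ^ 2) / 2 + p t x) * ∑ j, u t x j * pdF (φ t) j x

/-!
Testing the scheme with `w = u^m` removes the convective term, since `((u·∇)u, u) = 0` for a
real divergence-free trigonometric polynomial (on Fourier coefficients: the frequencies of the
three factors sum to zero and `k·û_k = 0`). The elementary inequality
`|a|² - |b|² ≤ 2 Re((a - b) ā)` then turns each step into
`‖u^m‖² + α²‖∇u^m‖² + 2κ‖∇u^m‖² ≤ ‖u^{m-1}‖² + α²‖∇u^{m-1}‖²`, and summing gives bounds in terms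
of `‖P_n u₀‖²_{H¹} ≤ ‖u₀‖²_{H²}`, uniformly in `α ≤ 1`, `n` and `M`. On `[t_m, t_{m+1})` both
interpolants are convex combinations of `u^m` and `u^{m+1}`, so integrating in time reduces the
`L²(H¹)` bounds to the discrete sum `κ Σ_m ‖u^m‖²_{H¹}`.
-/

open ComplexConjugate

lemma eK_add (a b : Fin 3 → ℤ) (x : Vec3) : eK (a + b) x = eK a x * eK b x := by
  simp only [eK, ← Complex.exp_add, ← mul_add, ← Finset.sum_add_distrib, Pi.add_apply,
    Int.cast_add, add_mul]

lemma conj_eK (k : Fin 3 → ℤ) (x : Vec3) : conj (eK k x) = eK (-k) x := by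
  simp only [eK, ← Complex.exp_conj, map_mul, Complex.conj_I, map_sum, map_intCast,
    Complex.conj_ofReal, Pi.neg_apply, Int.cast_neg, neg_mul, Finset.sum_neg_distrib, mul_neg]

@[fun_prop]
lemma continuous_eK (k : Fin 3 → ℤ) : Continuous (eK k) := by
  unfold eK; fun_prop

lemma integrableOn_Box_of_continuous {f : Vec3 → ℂ} (hf : Continuous f) : IntegrableOn f Box :=
  (hf.continuousOn.integrableOn_compact (isCompact_univ_pi fun _ => isCompact_Icc)).mono_set
    (Set.pi_mono fun _ _ => Set.Ico_subset_Icc_self)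

lemma integral_Ico_exp_int_mul_I (k : ℤ) :
    ∫ y in Set.Ico 0 (2 * π), Complex.exp (Complex.I * k * y)
      = if k = 0 then (2 * π : ℂ) else 0 := by
  rw [integral_Ico_eq_integral_Ioo, ← integral_Ioc_eq_integral_Ioo,
    ← intervalIntegral.integral_of_le (by positivity)]
  split_ifs with hk
  · simp [hk]
  · rw [integral_exp_mul_complex (by simpa [Complex.I_ne_zero] using hk)]
    have : Complex.exp (Complex.I * k * (2 * π)) = 1 := by
      rw [← Complex.exp_int_mul_two_pi_mul_I k]; ring_nf
    simp [this]

lemma integral_eK (k : Fin 3 → ℤ) :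
    ∫ x in Box, eK k x = if k = 0 then (2 * π : ℂ) ^ 3 else 0 := by
  have hprod : ∀ x : Vec3, eK k x = ∏ j, Complex.exp (Complex.I * k j * x j) := fun x => by
    simp only [eK, Finset.mul_sum, Complex.exp_sum, mul_assoc]
  simp_rw [hprod]
  rw [Box, volume_pi, Measure.restrict_pi_pi,
    integral_fintype_prod_eq_prod (fun j (y : ℝ) => Complex.exp (Complex.I * k j * y))]
  simp only [integral_Ico_exp_int_mul_I]
  split_ifs with hk
  · simp [hk]
  · obtain ⟨j, hj⟩ := Function.ne_iff.1 hk
    exact Finset.prod_eq_zero (Finset.mem_univ j) (if_neg hj)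

lemma realizeS_eq_tsum {q : (Fin 3 → ℤ) → ℂ} (hq : ∀ k, q (-k) = conj (q k)) (x : Vec3) :
    (realizeS q x : ℂ) = ∑' k, q k * eK k x := by
  refine Complex.conj_eq_iff_re.mp ?_
  rw [Complex.conj_tsum]
  simp_rw [map_mul, ← hq, conj_eK]
  exact (Equiv.neg (Fin 3 → ℤ)).tsum_eq fun k => q k * eK k x

lemma realize_eq_sum {c : Coef} {s : Finset (Fin 3 → ℤ)} (hs : ∀ k ∉ s, c k = 0)
    (hc : ∀ k i, c (-k) i = conj (c k i)) (x : Vec3) (i : Fin 3) :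
    (realize c x i : ℂ) = ∑ k ∈ s, c k i * eK k x := by
  rw [show realize c x i = realizeS (fun k => c k i) x from rfl,
    realizeS_eq_tsum (fun k => hc k i)]
  exact tsum_eq_sum fun k hk => by simp [hs k hk]

lemma integral_trigPoly_mul_trigPoly_mul_trigPoly (s : Finset (Fin 3 → ℤ))
    (a b d : (Fin 3 → ℤ) → ℂ) :
    ∫ x in Box, (∑ k ∈ s, a k * eK k x) * (∑ m ∈ s, b m * eK m x) * (∑ l ∈ s, d l * eK l x)
      = (2 * π : ℂ) ^ 3 *
        ∑ k ∈ s, ∑ m ∈ s, ∑ l ∈ s, if k + m + l = 0 then a k * b m * d l else 0 := by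
  have hexpand : ∀ x, (∑ k ∈ s, a k * eK k x) * (∑ m ∈ s, b m * eK m x) *
      (∑ l ∈ s, d l * eK l x)
        = ∑ k ∈ s, ∑ m ∈ s, ∑ l ∈ s, a k * b m * d l * eK (k + m + l) x := fun x => by
    rw [Finset.sum_mul_sum, Finset.sum_mul]
    refine Finset.sum_congr rfl fun k _ => ?_
    rw [Finset.sum_mul]
    refine Finset.sum_congr rfl fun m _ => ?_
    rw [Finset.mul_sum]
    refine Finset.sum_congr rfl fun l _ => ?_
    rw [eK_add, eK_add]
    ring
  have hint : ∀ k m l, IntegrableOn (fun x => a k * b m * d l * eK (k + m + l) x) Box :=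
    fun k m l => integrableOn_Box_of_continuous (by fun_prop)
  simp_rw [hexpand]
  rw [integral_finsetSum _ fun k _ => integrable_finsetSum _ fun m _ =>
    integrable_finsetSum _ fun l _ => hint k m l]
  simp_rw [Finset.mul_sum]
  refine Finset.sum_congr rfl fun k _ => ?_
  rw [integral_finsetSum _ fun m _ => integrable_finsetSum _ fun l _ => hint k m l]
  refine Finset.sum_congr rfl fun m _ => ?_
  rw [integral_finsetSum _ fun l _ => hint k m l]
  refine Finset.sum_congr rfl fun l _ => ?_
  rw [integral_const_mul, integral_eK]
  split_ifs <;> ring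

lemma sum_sum_eq_zero_of_add_swap {α R : Type*} [NonAssocRing R] [NoZeroDivisors R]
    [CharZero R] (s : Finset α) (G : α → α → R) (h : ∀ m l, G m l + G l m = 0) :
    ∑ m ∈ s, ∑ l ∈ s, G m l = 0 := by
  refine add_self_eq_zero.mp ?_
  conv_lhs => arg 2; rw [Finset.sum_comm]
  rw [← Finset.sum_add_distrib]
  exact Finset.sum_eq_zero fun m _ => by
    rw [← Finset.sum_add_distrib]; exact Finset.sum_eq_zero fun l _ => h m l

lemma sum_convection_eq_zero {c : Coef} (hdiv : ∀ k, ∑ j, (k j : ℂ) * c k j = 0)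
    (s : Finset (Fin 3 → ℤ)) :
    ∑ i, ∑ j, ∑ k ∈ s, ∑ m ∈ s, ∑ l ∈ s,
      (if k + m + l = 0 then c k j * pd j c m i * c l i else 0) = 0 := by
  refine Finset.sum_eq_zero fun i _ => ?_
  rw [Finset.sum_comm]
  refine Finset.sum_eq_zero fun k _ => ?_
  rw [Finset.sum_comm]
  simp_rw [Finset.sum_comm (s := Finset.univ) (t := s)]
  -- Swapping `m` and `l` pairs each term with one whose sum is `-I (k·ĉ_k) ĉ_m ĉ_l`,
  -- because `m + l = -k`.
  refine sum_sum_eq_zero_of_add_swap s _ fun m l => ?_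
  rw [← Finset.sum_add_distrib]
  by_cases hkml : k + m + l = 0
  · have hj : ∀ j, (m j : ℂ) + l j = -k j := fun j => by
      have := congrFun hkml j
      simp only [Pi.add_apply, Pi.zero_apply] at this
      exact_mod_cast (by omega : m j + l j = -k j)
    simp only [hkml, add_right_comm k l m, if_true, pd]
    calc ∑ j, (c k j * (Complex.I * m j * c m i) * c l i
          + c k j * (Complex.I * l j * c l i) * c m i)
        = ∑ j, -Complex.I * c m i * c l i * ((k j : ℂ) * c k j) :=
          Finset.sum_congr rfl fun j _ => by
            linear_combination Complex.I * c k j * c m i * c l i * hj j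
      _ = 0 := by rw [← Finset.mul_sum, hdiv, mul_zero]
  · simp [hkml, add_right_comm k l m]

lemma pd_neg {c : Coef} (hc : ∀ k i, c (-k) i = conj (c k i)) (j : Fin 3) (k : Fin 3 → ℤ)
    (i : Fin 3) : pd j c (-k) i = conj (pd j c k i) := by
  simp only [pd, hc k i, map_mul, Complex.conj_I, map_intCast, Pi.neg_apply, Int.cast_neg]
  ring

theorem nlF_self_eq_zero {c : Coef} (hre : ∀ k i, c (-k) i = conj (c k i))
    (hdiv : ∀ k, ∑ j, (k j : ℂ) * c k j = 0) {s : Finset (Fin 3 → ℤ)}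
    (hs : ∀ k ∉ s, c k = 0) : nlF c c = 0 := by
  have hpd : ∀ j, ∀ k ∉ s, pd j c k = 0 := fun j k hk => funext fun i => by
    simp [pd, hs k hk]
  have hexpand : (nlF c c : ℂ) = (2 * π : ℂ) ^ 3 * ∑ i, ∑ j, ∑ k ∈ s, ∑ m ∈ s, ∑ l ∈ s,
      (if k + m + l = 0 then c k j * pd j c m i * c l i else 0) := by
    rw [nlF, ← integral_complex_ofReal]
    push_cast
    simp_rw [realize_eq_sum hs hre, realize_eq_sum (hpd _) (pd_neg hre _)]
    rw [Finset.mul_sum,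
      integral_finsetSum _ fun i _ => integrableOn_Box_of_continuous (by fun_prop)]
    refine Finset.sum_congr rfl fun i _ => ?_
    simp_rw [Finset.sum_mul (s := (Finset.univ : Finset (Fin 3)))]
    rw [Finset.mul_sum,
      integral_finsetSum _ fun j _ => integrableOn_Box_of_continuous (by fun_prop)]
    exact Finset.sum_congr rfl fun j _ => integral_trigPoly_mul_trigPoly_mul_trigPoly s _ _ _
  rw [← Complex.ofReal_eq_zero, hexpand, sum_convection_eq_zero hdiv, mul_zero]

lemma normSq_sub_normSq_le (a b : ℂ) :
    Complex.normSq a - Complex.normSq b ≤ 2 * ((a - b) * conj a).re := by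
  simp only [Complex.normSq_apply, Complex.mul_re, Complex.sub_re, Complex.sub_im,
    Complex.conj_re, Complex.conj_im]
  nlinarith [sq_nonneg (a.re - b.re), sq_nonneg (a.im - b.im)]

lemma normSq_add_mul_sub_le {θ : ℝ} (hθ₀ : 0 ≤ θ) (hθ₁ : θ ≤ 1) (a b : ℂ) :
    Complex.normSq (a + θ * (b - a)) ≤ Complex.normSq a + Complex.normSq b := by
  -- `|(1-θ)a + θb|² = (1-θ)|a|² + θ|b|² - θ(1-θ)|a-b|²`
  have hθθ : 0 ≤ θ * (1 - θ) := mul_nonneg hθ₀ (sub_nonneg.2 hθ₁)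
  simp only [Complex.normSq_apply, Complex.add_re, Complex.add_im, Complex.mul_re,
    Complex.mul_im, Complex.sub_re, Complex.sub_im, Complex.ofReal_re, Complex.ofReal_im]
  nlinarith [mul_nonneg hθθ (sq_nonneg (a.re - b.re)), mul_nonneg hθθ (sq_nonneg (a.im - b.im)),
    mul_nonneg hθ₀ (add_nonneg (sq_nonneg a.re) (sq_nonneg a.im)),
    mul_nonneg (sub_nonneg.2 hθ₁) (add_nonneg (sq_nonneg b.re) (sq_nonneg b.im))]

lemma kSq_nonneg (k : Fin 3 → ℤ) : (0 : ℝ) ≤ kSq k := by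
  exact_mod_cast Finset.sum_nonneg fun j _ => sq_nonneg (k j)

def wInner (w : (Fin 3 → ℤ) → ℝ) (c d : Coef) : ℝ :=
  (2 * π) ^ 3 * ∑' k, w k * ∑ i, (c k i * conj (d k i)).re

lemma wInner_self (w : (Fin 3 → ℤ) → ℝ) (c : Coef) :
    wInner w c c = (2 * π) ^ 3 * ∑' k, w k * ∑ i, Complex.normSq (c k i) := by
  simp only [wInner, Complex.mul_conj, Complex.ofReal_re]

lemma ipS_eq_wInner (c d : Coef) : ipS c d = wInner 1 c d := by
  simp only [ipS, wInner, Pi.one_apply, one_mul]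

lemma gipS_eq_wInner (c d : Coef) : gipS c d = wInner (fun k => kSq k) c d := rfl

lemma l2S_eq_wInner (c : Coef) : l2S c = wInner 1 c c := by
  simp only [l2S, wInner_self, Pi.one_apply, one_mul]

lemma gradS_eq_wInner (c : Coef) : gradS c = wInner (fun k => kSq k) c c := by
  rw [gradS, wInner_self]

lemma gipS_self (c : Coef) : gipS c c = gradS c := by
  rw [gipS_eq_wInner, gradS_eq_wInner]

lemma wInner_eq_sum (w : (Fin 3 → ℤ) → ℝ) {c : Coef} {s : Finset (Fin 3 → ℤ)}
    (hs : ∀ k ∉ s, c k = 0) (d : Coef) :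
    wInner w c d = (2 * π) ^ 3 * ∑ k ∈ s, w k * ∑ i, (c k i * conj (d k i)).re := by
  rw [wInner, tsum_eq_sum fun k hk => by simp [hs k hk]]

section

variable {w : (Fin 3 → ℤ) → ℝ}

lemma wInner_self_nonneg (hw : ∀ k, 0 ≤ w k) (c : Coef) : 0 ≤ wInner w c c := by
  rw [wInner_self]
  exact mul_nonneg (by positivity) (tsum_nonneg fun k =>
    mul_nonneg (hw k) (Finset.sum_nonneg fun i _ => Complex.normSq_nonneg _))

lemma wInner_self_sub_wInner_self_le (hw : ∀ k, 0 ≤ w k) {a b : Coef} {s : Finset (Fin 3 → ℤ)}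
    (ha : ∀ k ∉ s, a k = 0) (hb : ∀ k ∉ s, b k = 0) {κ : ℝ} (hκ : 0 < κ) :
    wInner w a a - wInner w b b ≤ 2 * κ * wInner w (dtc κ a b) a := by
  have hd : ∀ k ∉ s, dtc κ a b k = 0 := fun k hk => funext fun i => by
    simp [dtc, ha k hk, hb k hk]
  have hterm : ∀ k i, (a k i * conj (a k i)).re - (b k i * conj (b k i)).re
      ≤ 2 * κ * (dtc κ a b k i * conj (a k i)).re := fun k i => by
    rw [dtc, div_mul_eq_mul_div, Complex.div_ofReal_re, mul_div_assoc', mul_div_right_comm,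
      mul_div_cancel_right₀ _ hκ.ne', Complex.mul_conj, Complex.mul_conj]
    exact normSq_sub_normSq_le _ _
  rw [wInner_eq_sum w ha, wInner_eq_sum w hb, wInner_eq_sum w hd]
  calc _ = (2 * π) ^ 3 * ∑ k ∈ s, w k * ∑ i,
        ((a k i * conj (a k i)).re - (b k i * conj (b k i)).re) := by
        simp only [Finset.sum_sub_distrib, mul_sub]
    _ ≤ (2 * π) ^ 3 * ∑ k ∈ s, w k * ∑ i, 2 * κ * (dtc κ a b k i * conj (a k i)).re := by
        gcongr with k _ i
        · exact hw k
        · exact hterm k i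
    _ = _ := by
        simp only [Finset.mul_sum]
        exact Finset.sum_congr rfl fun _ _ => Finset.sum_congr rfl fun _ _ => by ring

lemma wInner_self_add_mul_sub_le (hw : ∀ k, 0 ≤ w k) {a b : Coef} {s : Finset (Fin 3 → ℤ)}
    (ha : ∀ k ∉ s, a k = 0) (hb : ∀ k ∉ s, b k = 0) {θ : ℝ} (hθ₀ : 0 ≤ θ) (hθ₁ : θ ≤ 1) :
    wInner w (fun k i => a k i + θ * (b k i - a k i)) (fun k i => a k i + θ * (b k i - a k i))
      ≤ wInner w a a + wInner w b b := by
  have hc : ∀ k ∉ s, (fun i => a k i + θ * (b k i - a k i) : Fin 3 → ℂ) = 0 :=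
    fun k hk => funext fun i => by simp [ha k hk, hb k hk]
  rw [wInner_eq_sum w hc, wInner_eq_sum w ha, wInner_eq_sum w hb, ← mul_add,
    ← Finset.sum_add_distrib]
  refine mul_le_mul_of_nonneg_left (Finset.sum_le_sum fun k _ => ?_) (by positivity)
  rw [← mul_add, ← Finset.sum_add_distrib]
  refine mul_le_mul_of_nonneg_left (Finset.sum_le_sum fun i _ => ?_) (hw k)
  simp only [Complex.mul_conj, Complex.ofReal_re]
  exact normSq_add_mul_sub_le hθ₀ hθ₁ _ _

end

lemma l2S_nonneg (c : Coef) : 0 ≤ l2S c :=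
  l2S_eq_wInner c ▸ wInner_self_nonneg (fun _ => zero_le_one) c

lemma gradS_nonneg (c : Coef) : 0 ≤ gradS c :=
  gradS_eq_wInner c ▸ wInner_self_nonneg kSq_nonneg c

def cube (n : ℕ) : Finset (Fin 3 → ℤ) := Finset.Icc (fun _ => -(n : ℤ)) (fun _ => n)

lemma mem_cube_of_kSq_le {n : ℕ} {k : Fin 3 → ℤ} (h : kSq k ≤ (n : ℤ) ^ 2) : k ∈ cube n := by
  have hj : ∀ j, k j ^ 2 ≤ (n : ℤ) ^ 2 := fun j =>
    (Finset.single_le_sum (f := fun j => k j ^ 2) (fun _ _ => sq_nonneg _)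
      (Finset.mem_univ j)).trans h
  simp only [cube, Finset.mem_Icc, Pi.le_def]
  exact ⟨fun j => (abs_le_of_sq_le_sq' (hj j) (by positivity)).1,
    fun j => (abs_le_of_sq_le_sq' (hj j) (by positivity)).2⟩

lemma MemVn.eq_zero_of_notMem_cube {n : ℕ} {c : Coef} (h : MemVn n c) {k : Fin 3 → ℤ}
    (hk : k ∉ cube n) : c k = 0 :=
  funext (h.2 k (lt_of_not_ge fun h' => hk (mem_cube_of_kSq_le h')))

lemma projN_eq_zero_of_notMem_cube (n : ℕ) (c : Coef) {k : Fin 3 → ℤ} (hk : k ∉ cube n) :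
    projN n c k = 0 :=
  funext fun _ => if_neg fun h => hk (mem_cube_of_kSq_le h)

def h1NormSq (c : Coef) : ℝ := l2S c + gradS c

def h2NormSq (c : Coef) : ℝ := wInner (fun k => (1 + (kSq k : ℝ)) ^ 2) c c

lemma h2NormSq_nonneg (c : Coef) : 0 ≤ h2NormSq c :=
  wInner_self_nonneg (fun _ => sq_nonneg _) c

lemma wInner_self_projN_le {w w' : (Fin 3 → ℤ) → ℝ} (hw' : ∀ k, 0 ≤ w' k) (hww' : ∀ k, w k ≤ w' k)
    {c : Coef} (hc : Summable fun k => w' k * ∑ i, Complex.normSq (c k i)) (n : ℕ) :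
    wInner w (projN n c) (projN n c) ≤ wInner w' c c := by
  rw [wInner_eq_sum w (fun k => projN_eq_zero_of_notMem_cube n c), wInner_self]
  simp only [Complex.mul_conj, Complex.ofReal_re]
  gcongr
  refine (Finset.sum_le_sum fun k _ => ?_).trans (hc.sum_le_tsum _ fun k _ =>
    mul_nonneg (hw' k) (Finset.sum_nonneg fun i _ => Complex.normSq_nonneg _))
  refine mul_le_mul (hww' k) (Finset.sum_le_sum fun _ _ => ?_)
    (Finset.sum_nonneg fun _ _ => Complex.normSq_nonneg _) (hw' k)
  unfold projN
  split_ifs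
  · exact le_rfl
  · simpa using Complex.normSq_nonneg _

lemma l2S_projN_le {c : Coef} (hc : MemH2 c) (n : ℕ) : l2S (projN n c) ≤ h2NormSq c := by
  rw [l2S_eq_wInner]
  exact wInner_self_projN_le (fun _ => sq_nonneg _)
    (fun k => show (1 : ℝ) ≤ _ by nlinarith [kSq_nonneg k]) hc.2 n

lemma gradS_projN_le {c : Coef} (hc : MemH2 c) (n : ℕ) : gradS (projN n c) ≤ h2NormSq c := by
  rw [gradS_eq_wInner]
  exact wInner_self_projN_le (fun _ => sq_nonneg _) (fun k => by nlinarith [kSq_nonneg k]) hc.2 n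

lemma toNat_floor_div_mul_le_and_lt {κ t : ℝ} (hκ : 0 < κ) (ht : 0 ≤ t) :
    (⌊t / κ⌋.toNat : ℝ) * κ ≤ t ∧ t < (⌊t / κ⌋.toNat + 1) * κ := by
  have hcast : (⌊t / κ⌋.toNat : ℝ) = ⌊t / κ⌋ := by
    exact_mod_cast Int.toNat_of_nonneg (Int.floor_nonneg.2 (div_nonneg ht hκ.le))
  rw [hcast, ← le_div_iff₀ hκ, ← div_lt_iff₀ hκ]
  exact ⟨Int.floor_le _, Int.lt_floor_add_one _⟩

lemma toNat_floor_div_lt {κ t : ℝ} (hκ : 0 < κ) {N : ℕ} (ht : t ∈ Set.Ico 0 (N * κ)) :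
    ⌊t / κ⌋.toNat < N := by
  have h0 : 0 ≤ ⌊t / κ⌋ := Int.floor_nonneg.2 (div_nonneg ht.1 hκ.le)
  have hN : ⌊t / κ⌋ < N := Int.floor_lt.2 ((div_lt_iff₀ hκ).2 ht.2)
  omega

lemma integral_Ico_step {κ : ℝ} (hκ : 0 < κ) (φ : ℕ → ℝ) (N : ℕ) :
    IntegrableOn (fun t => φ ⌊t / κ⌋.toNat) (Set.Ico 0 (N * κ)) ∧
      ∫ t in Set.Ico 0 (N * κ), φ ⌊t / κ⌋.toNat = ∑ m ∈ Finset.range N, κ * φ m := by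
  induction N with
  | zero => simp
  | succ N ih =>
    have hstep : Set.EqOn (fun t => φ ⌊t / κ⌋.toNat) (fun _ => φ N)
        (Set.Ico (N * κ) ((N + 1 : ℕ) * κ)) := fun t ht => by
      have hfloor : ⌊t / κ⌋ = N := Int.floor_eq_iff.2 ⟨(le_div_iff₀ hκ).2 ht.1,
        (div_lt_iff₀ hκ).2 (by exact_mod_cast ht.2)⟩
      simp [hfloor]
    have hint : IntegrableOn (fun t => φ ⌊t / κ⌋.toNat) (Set.Ico (N * κ) ((N + 1 : ℕ) * κ)) :=
      (integrableOn_congr_fun hstep measurableSet_Ico).2 (integrableOn_const (by simp))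
    have hunion := Set.Ico_union_Ico_eq_Ico (by positivity : (0 : ℝ) ≤ N * κ)
      (by push_cast; nlinarith : (N : ℝ) * κ ≤ (N + 1 : ℕ) * κ)
    refine ⟨hunion ▸ ih.1.union hint, ?_⟩
    rw [← hunion, setIntegral_union Set.Ico_disjoint_Ico_same measurableSet_Ico ih.1 hint, ih.2,
      setIntegral_congr_fun measurableSet_Ico hstep, setIntegral_const, Finset.sum_range_succ,
      Real.volume_real_Ico_of_le (by push_cast; nlinarith), smul_eq_mul]
    push_cast
    ring

lemma setIntegral_Ioo_le_sum {κ : ℝ} (hκ : 0 < κ) (N : ℕ) {f : ℝ → ℝ} (φ : ℕ → ℝ)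
    (hf : ∀ t, 0 ≤ f t) (hfφ : ∀ t ∈ Set.Ioo 0 (N * κ), f t ≤ φ ⌊t / κ⌋.toNat) :
    ∫ t in Set.Ioo 0 (N * κ), f t ≤ ∑ m ∈ Finset.range N, κ * φ m := by
  obtain ⟨hint, hval⟩ := integral_Ico_step hκ φ N
  rw [← hval, integral_Ico_eq_integral_Ioo]
  exact integral_mono_of_nonneg (ae_of_all _ hf) (hint.mono_set Set.Ioo_subset_Ico_self)
    ((ae_restrict_iff' measurableSet_Ioo).2 (ae_of_all _ hfφ))

lemma essSup_le_of_forall_mem_Ioo_le {T c : ℝ} (hT : 0 < T) {f : ℝ → ℝ} (hf : ∀ t, 0 ≤ f t)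
    (hfc : ∀ t ∈ Set.Ioo 0 T, f t ≤ c) : essSup f (volume.restrict (Set.Ioo 0 T)) ≤ c := by
  have : (ae (volume.restrict (Set.Ioo 0 T))).NeBot := ae_neBot.2 (by simp [hT])
  exact essSup_le_of_ae_le c ((ae_restrict_iff' measurableSet_Ioo).2 (ae_of_all _ hfc))
    (isCoboundedUnder_le_of_eventually_le _ (Eventually.of_forall hf))

lemma pwc_eq_of_mem_Ioo {T : ℝ} {M : ℕ} {u : ℕ → Coef} {t : ℝ} (ht : t ∈ Set.Ioo 0 T) :
    pwc T M u t = u (⌊t / (T / M)⌋.toNat + 1) :=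
  if_neg ht.2.ne

lemma toNat_floor_div_lt_of_mem_Ioo {T : ℝ} {M : ℕ} (hM : 0 < M) {t : ℝ}
    (ht : t ∈ Set.Ioo 0 T) : ⌊t / (T / M)⌋.toNat < M := by
  refine toNat_floor_div_lt (div_pos (ht.1.trans ht.2) (by exact_mod_cast hM)) ⟨ht.1.le, ?_⟩
  rw [mul_div_cancel₀ _ (by positivity)]
  exact ht.2

lemma wInner_self_pwl_le {w : (Fin 3 → ℤ) → ℝ} (hw : ∀ k, 0 ≤ w k) {T : ℝ} {M : ℕ}
    (hM : 0 < M) {u : ℕ → Coef} {s : Finset (Fin 3 → ℤ)} (hu : ∀ m ≤ M, ∀ k ∉ s, u m k = 0)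
    {t : ℝ} (ht : t ∈ Set.Ioo 0 T) :
    wInner w (pwl T M u t) (pwl T M u t)
      ≤ wInner w (u ⌊t / (T / M)⌋.toNat) (u ⌊t / (T / M)⌋.toNat)
        + wInner w (u (⌊t / (T / M)⌋.toNat + 1)) (u (⌊t / (T / M)⌋.toNat + 1)) := by
  have hκ : 0 < T / M := div_pos (ht.1.trans ht.2) (by exact_mod_cast hM)
  obtain ⟨hle, hlt⟩ := toNat_floor_div_mul_le_and_lt hκ ht.1.le
  have hidx := toNat_floor_div_lt_of_mem_Ioo hM ht
  rw [pwl, if_neg ht.2.ne]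
  exact wInner_self_add_mul_sub_le hw (hu _ hidx.le) (hu _ hidx)
    (div_nonneg (by linarith) hκ.le) ((div_le_one hκ).2 (by linarith))

namespace Scheme

variable {T α : ℝ} {n M : ℕ} {c0 : Coef} {u : ℕ → Coef}

lemma eq_zero_of_notMem_cube (hs : Scheme T α n M c0 u) {m : ℕ} (hm : m ≤ M)
    {k : Fin 3 → ℤ} (hk : k ∉ cube n) : u m k = 0 := by
  rcases Nat.eq_zero_or_pos m with rfl | hpos
  · rw [hs.1]
    exact projN_eq_zero_of_notMem_cube n c0 hk
  · exact MemVn.eq_zero_of_notMem_cube (hs.2 m hpos hm).1 hk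

lemma energy_step (hs : Scheme T α n M c0 u) (hT : 0 < T) {m : ℕ} (h1 : 1 ≤ m) (hm : m ≤ M) :
    l2S (u m) + α ^ 2 * gradS (u m) + 2 * (T / M) * gradS (u m)
      ≤ l2S (u (m - 1)) + α ^ 2 * gradS (u (m - 1)) := by
  have hκ : 0 < T / M := div_pos hT (by exact_mod_cast h1.trans hm)
  obtain ⟨hmem, heq⟩ := hs.2 m h1 hm
  have htest := heq (u m) hmem
  rw [nlF_self_eq_zero hmem.1.reality hmem.1.divFree
    fun k hk => MemVn.eq_zero_of_notMem_cube hmem hk, gipS_self, ipS_eq_wInner, gipS_eq_wInner]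
    at htest
  have hsm := fun k (hk : k ∉ cube n) => eq_zero_of_notMem_cube hs hm hk
  have hsm' := fun k (hk : k ∉ cube n) => eq_zero_of_notMem_cube hs (m.sub_le 1 |>.trans hm) hk
  have hl2 := wInner_self_sub_wInner_self_le (w := 1) (fun _ => zero_le_one) hsm hsm' hκ
  have hgrad := wInner_self_sub_wInner_self_le kSq_nonneg hsm hsm' hκ
  rw [← l2S_eq_wInner, ← l2S_eq_wInner] at hl2
  rw [← gradS_eq_wInner, ← gradS_eq_wInner] at hgrad
  nlinarith [mul_le_mul_of_nonneg_left hgrad (sq_nonneg α)]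

lemma energy_le (hs : Scheme T α n M c0 u) (hT : 0 < T) {m : ℕ} (hm : m ≤ M) :
    l2S (u m) + α ^ 2 * gradS (u m) + 2 * (T / M) * ∑ j ∈ Finset.range m, gradS (u (j + 1))
      ≤ l2S (u 0) + α ^ 2 * gradS (u 0) := by
  induction m with
  | zero => simp
  | succ m ih =>
    have hstep := energy_step hs hT (Nat.le_add_left 1 m) hm
    rw [Nat.add_sub_cancel] at hstep
    rw [Finset.sum_range_succ]
    linarith [ih (Nat.le_of_succ_le hm)]

lemma initial_energy_le (hs : Scheme T α n M c0 u) (h0 : MemH2 c0) (hα : α ^ 2 ≤ 1) :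
    l2S (u 0) + α ^ 2 * gradS (u 0) ≤ 2 * h2NormSq c0 := by
  rw [hs.1]
  nlinarith [l2S_projN_le h0 n, gradS_projN_le h0 n, gradS_nonneg (projN n c0)]

lemma l2S_le (hs : Scheme T α n M c0 u) (hT : 0 < T) (h0 : MemH2 c0) (hα : α ^ 2 ≤ 1)
    {m : ℕ} (hm : m ≤ M) : l2S (u m) ≤ 2 * h2NormSq c0 := by
  have hsum : 0 ≤ ∑ j ∈ Finset.range m, gradS (u (j + 1)) :=
    Finset.sum_nonneg fun j _ => gradS_nonneg _
  nlinarith [energy_le hs hT hm, initial_energy_le hs h0 hα, gradS_nonneg (u m),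
    sq_nonneg α, div_nonneg hT.le (M.cast_nonneg : (0 : ℝ) ≤ M)]

lemma sum_gradS_le (hs : Scheme T α n M c0 u) (hT : 0 < T) (h0 : MemH2 c0) (hα : α ^ 2 ≤ 1) :
    2 * (T / M) * ∑ m ∈ Finset.range M, gradS (u (m + 1)) ≤ 2 * h2NormSq c0 := by
  nlinarith [energy_le hs hT le_rfl, initial_energy_le hs h0 hα, gradS_nonneg (u M),
    sq_nonneg α, l2S_nonneg (u M)]

lemma sum_energy_le (hs : Scheme T α n M c0 u) (hT : 0 < T) (hM : 0 < M) (h0 : MemH2 c0)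
    (hα : α ^ 2 ≤ 1) :
    ∑ m ∈ Finset.range M, T / M * (h1NormSq (u m) + h1NormSq (u (m + 1)))
      ≤ (5 * T + 2) * h2NormSq c0 := by
  set B := h2NormSq c0
  have hM' : (1 : ℝ) ≤ M := by exact_mod_cast hM
  have hκM : T / M * M = T := div_mul_cancel₀ T (by positivity)
  have hκT : T / M ≤ T := div_le_self hT.le hM'
  have hL : ∑ m ∈ Finset.range M, (l2S (u m) + l2S (u (m + 1))) ≤ M * (4 * B) := by
    simpa using Finset.sum_le_card_nsmul (Finset.range M) _ (4 * B) fun m hm => by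
      have hm := Finset.mem_range.1 hm
      linarith [l2S_le hs hT h0 hα hm.le, l2S_le hs hT h0 hα hm]
  have hG0 : gradS (u 0) ≤ B := hs.1 ▸ gradS_projN_le h0 n
  have hshift : ∑ m ∈ Finset.range M, gradS (u m)
      ≤ gradS (u 0) + ∑ m ∈ Finset.range M, gradS (u (m + 1)) := by
    rw [add_comm, ← Finset.sum_range_succ' (fun m => gradS (u m))]
    exact Finset.sum_le_sum_of_subset_of_nonneg (Finset.range_subset_range.2 M.le_succ)
      fun m _ _ => gradS_nonneg _
  have hG := sum_gradS_le hs hT h0 hα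
  have hB : 0 ≤ B := h2NormSq_nonneg c0
  have hsplit : ∑ m ∈ Finset.range M,
      T / M * (h1NormSq (u m) + h1NormSq (u (m + 1)))
      = T / M * ∑ m ∈ Finset.range M, (l2S (u m) + l2S (u (m + 1)))
        + T / M * ∑ m ∈ Finset.range M, gradS (u m)
        + T / M * ∑ m ∈ Finset.range M, gradS (u (m + 1)) := by
    simp only [h1NormSq, ← Finset.mul_sum, ← mul_add, ← Finset.sum_add_distrib]
    exact congrArg _ (Finset.sum_congr rfl fun m _ => by ring)
  have hκ : 0 ≤ T / M := div_nonneg hT.le M.cast_nonneg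
  have hL' : T / M * ∑ m ∈ Finset.range M, (l2S (u m) + l2S (u (m + 1))) ≤ 4 * T * B :=
    (mul_le_mul_of_nonneg_left hL hκ).trans_eq (by rw [← mul_assoc, hκM]; ring)
  rw [hsplit]
  nlinarith [mul_le_mul_of_nonneg_left hshift hκ, mul_le_mul_of_nonneg_left hG0 hκ,
    mul_le_mul_of_nonneg_right hκT hB]

lemma h1NormSq_pwl_le (hs : Scheme T α n M c0 u) (hM : 0 < M) {t : ℝ} (ht : t ∈ Set.Ioo 0 T) :
    h1NormSq (pwl T M u t)
      ≤ h1NormSq (u ⌊t / (T / M)⌋.toNat) + h1NormSq (u (⌊t / (T / M)⌋.toNat + 1)) := by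
  have hu := fun m (hm : m ≤ M) k (hk : k ∉ cube n) => eq_zero_of_notMem_cube hs hm hk
  simp only [h1NormSq, l2S_eq_wInner, gradS_eq_wInner]
  linarith [wInner_self_pwl_le (w := 1) (fun _ => zero_le_one) hM hu ht,
    wInner_self_pwl_le kSq_nonneg hM hu ht]

lemma h1NormSq_pwc_le {t : ℝ} (ht : t ∈ Set.Ioo 0 T) :
    h1NormSq (pwc T M u t)
      ≤ h1NormSq (u ⌊t / (T / M)⌋.toNat) + h1NormSq (u (⌊t / (T / M)⌋.toNat + 1)) := by
  rw [pwc_eq_of_mem_Ioo ht]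
  exact le_add_of_nonneg_left (add_nonneg (l2S_nonneg _) (gradS_nonneg _))

lemma l2S_pwl_le (hs : Scheme T α n M c0 u) (hT : 0 < T) (hM : 0 < M) (h0 : MemH2 c0)
    (hα : α ^ 2 ≤ 1) {t : ℝ} (ht : t ∈ Set.Ioo 0 T) : l2S (pwl T M u t) ≤ 4 * h2NormSq c0 := by
  have hidx := toNat_floor_div_lt_of_mem_Ioo hM ht
  rw [l2S_eq_wInner]
  refine (wInner_self_pwl_le (w := 1) (fun _ => zero_le_one) hM
    (fun m hm k hk => eq_zero_of_notMem_cube hs hm hk) ht).trans ?_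
  rw [← l2S_eq_wInner, ← l2S_eq_wInner]
  linarith [l2S_le hs hT h0 hα hidx.le, l2S_le hs hT h0 hα hidx]

lemma l2S_pwc_le (hs : Scheme T α n M c0 u) (hT : 0 < T) (hM : 0 < M) (h0 : MemH2 c0)
    (hα : α ^ 2 ≤ 1) {t : ℝ} (ht : t ∈ Set.Ioo 0 T) : l2S (pwc T M u t) ≤ 4 * h2NormSq c0 := by
  rw [pwc_eq_of_mem_Ioo ht]
  linarith [l2S_le hs hT h0 hα (m := _ + 1) (toNat_floor_div_lt_of_mem_Ioo hM ht),
    h2NormSq_nonneg c0]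

lemma setIntegral_le (hs : Scheme T α n M c0 u) (hT : 0 < T) (hM : 0 < M) (h0 : MemH2 c0)
    (hα : α ^ 2 ≤ 1) {f : ℝ → ℝ} (hf : ∀ t, 0 ≤ f t)
    (hfu : ∀ t ∈ Set.Ioo 0 T,
      f t ≤ h1NormSq (u ⌊t / (T / M)⌋.toNat) + h1NormSq (u (⌊t / (T / M)⌋.toNat + 1))) :
    ∫ t in Set.Ioo 0 T, f t ≤ (5 * T + 2) * h2NormSq c0 := by
  have hκ : 0 < T / M := div_pos hT (by exact_mod_cast hM)
  have hIoo : Set.Ioo 0 T = Set.Ioo 0 (M * (T / M)) := by rw [mul_div_cancel₀ T (by positivity)]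
  rw [hIoo] at hfu ⊢
  exact (setIntegral_Ioo_le_sum hκ M _ hf hfu).trans (sum_energy_le hs hT hM h0 hα)

end Scheme

/-- Proposition 4.4, estimates (4.1), (4.3), (4.5).
For `u₀ ∈ H²_{0,σ}` and `α ∈ (0,1]`, there is `c > 0` independent of `α`, `M`
and `n` such that the interpolants of a scheme solution satisfy
`ess sup_(0,T) ‖v‖₂ + ‖v‖_{L²(H¹)} ≤ c`, `ess sup_(0,T) ‖u‖₂ + ‖u‖_{L²(H¹)} ≤ c`
and `α ‖∇v‖_{L²(L²)} ≤ c`. -/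
theorem interpolants_energy_bounds
    (T : ℝ) (hT : 0 < T) (c0 : Coef) (h0 : MemH2 c0) :
    ∃ c : ℝ, 0 < c ∧ ∀ α : ℝ, α ∈ Set.Ioc (0 : ℝ) 1 → ∀ n M : ℕ, 1 ≤ M →
      ∀ u : ℕ → Coef, Scheme T α n M c0 u →
        (essSup (fun t => Real.sqrt (l2S (pwl T M u t)))
              (volume.restrict (Set.Ioo 0 T))
            + Real.sqrt (∫ t in Set.Ioo 0 T, l2S (pwl T M u t) + gradS (pwl T M u t))
          ≤ c) ∧
        (essSup (fun t => Real.sqrt (l2S (pwc T M u t)))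
              (volume.restrict (Set.Ioo 0 T))
            + Real.sqrt (∫ t in Set.Ioo 0 T, l2S (pwc T M u t) + gradS (pwc T M u t))
          ≤ c) ∧
        α * Real.sqrt (∫ t in Set.Ioo 0 T, gradS (pwl T M u t)) ≤ c := by
  set B := h2NormSq c0
  refine ⟨√(4 * B) + √((5 * T + 2) * B) + 1, by positivity, fun α hα n M hM u hs => ?_⟩
  have hα2 : α ^ 2 ≤ 1 := pow_le_one₀ hα.1.le hα.2
  have hsup : ∀ v : ℝ → Coef, (∀ t ∈ Set.Ioo 0 T, l2S (v t) ≤ 4 * B) →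
      essSup (fun t => √(l2S (v t))) (volume.restrict (Set.Ioo 0 T)) ≤ √(4 * B) :=
    fun v hv => essSup_le_of_forall_mem_Ioo_le hT (fun _ => Real.sqrt_nonneg _)
      fun t ht => Real.sqrt_le_sqrt (hv t ht)
  have hint : ∀ f : ℝ → ℝ, (∀ t, 0 ≤ f t) → (∀ t ∈ Set.Ioo 0 T,
      f t ≤ h1NormSq (u ⌊t / (T / M)⌋.toNat) + h1NormSq (u (⌊t / (T / M)⌋.toNat + 1))) →
      √(∫ t in Set.Ioo 0 T, f t) ≤ √((5 * T + 2) * B) :=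
    fun f hf hfu => Real.sqrt_le_sqrt (Scheme.setIntegral_le hs hT hM h0 hα2 hf hfu)
  have hpwl := hint (fun t => l2S (pwl T M u t) + gradS (pwl T M u t))
    (fun _ => add_nonneg (l2S_nonneg _) (gradS_nonneg _)) fun t => Scheme.h1NormSq_pwl_le hs hM
  have hpwc := hint (fun t => l2S (pwc T M u t) + gradS (pwc T M u t))
    (fun _ => add_nonneg (l2S_nonneg _) (gradS_nonneg _)) fun t => Scheme.h1NormSq_pwc_le
  have hgrad := hint (fun t => gradS (pwl T M u t)) (fun _ => gradS_nonneg _)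
    fun t ht => (le_add_of_nonneg_left (l2S_nonneg _)).trans (Scheme.h1NormSq_pwl_le hs hM ht)
  have hα_grad : α * √(∫ t in Set.Ioo 0 T, gradS (pwl T M u t))
      ≤ √(∫ t in Set.Ioo 0 T, gradS (pwl T M u t)) :=
    mul_le_of_le_one_left (Real.sqrt_nonneg _) hα.2
  refine ⟨?_, ?_, ?_⟩
  · linarith [hsup _ fun t => Scheme.l2S_pwl_le hs hT hM h0 hα2]
  · linarith [hsup _ fun t => Scheme.l2S_pwc_le hs hT hM h0 hα2]
  · linarith [Real.sqrt_nonneg (4 * B)]
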